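/- For every n ∈ ℕ and every y ∈ K_n there is a polynomial P(t) = Σ_{i=1}^{pos(Δ_{n+1},0)} c_i·t^i with Σ_{i=1}^{pos(Δ_{n+1},0)} |c_i| ≤ D_n for which |||P(T)y − e_0|||_{N_n} ≤ 3. -/

import Mathlib

open scoped Classical in
/-- The function `Next` from Definition 4.1, defined from the sequence `(b_n)`. -/
noncomputable def nextFn (b : ℕ → ℕ) : ℕ × ℕ → ℕ × ℕ :=
  fun p =>
    if (∃ n : ℕ, 1 ≤ n ∧ p.1 = b n ∧ Even p.2 ∧ p.2 < 2 * n) ∨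
       (∃ n : ℕ, 1 ≤ n ∧ p.1 = 2 * b n + 1 ∧ Odd p.2 ∧ 0 < p.2 ∧ p.2 ≤ 2 * n) ∨
       (p.1 = 0 ∧ Odd p.2) then
      (p.1, p.2 + 1)
    else if (∃ n : ℕ, 1 ≤ n ∧ p.1 = b n + 1 ∧ Odd p.2 ∧ p.2 < 2 * n) ∨
        (∃ n : ℕ, 1 ≤ n ∧ p.1 = 2 * b n ∧ Even p.2 ∧ 0 < p.2 ∧ p.2 ≤ 2 * n) then
      (p.1, p.2 - 1)
    else if Even p.2 then (p.1 + 1, p.2)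
    else (p.1 - 1, p.2)

/-- `enum k = Next^k (0, 0)`, the `k`-th element of the ordering of `ℕ × ℕ` defined by `Next`. -/
noncomputable def enum (b : ℕ → ℕ) (k : ℕ) : ℕ × ℕ := (nextFn b)^[k] (0, 0)

/-- The basis vector `e_k = e_{n,m}` where `pos (n, m) = k`, in `s₀,₀^ℕ = ℕ × ℕ →₀ ℝ`. -/
noncomputable def eVec (b : ℕ → ℕ) (k : ℕ) : ℕ × ℕ →₀ ℝ := Finsupp.single (enum b k) 1

/-- `|(x_{i,j})_i|_N = Σ_i |x_{i,j}| A_{N,i}`, the `N`-th seminorm of the `j`-th column. -/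
noncomputable def colNorm (A : ℕ → ℕ → ℝ) (N : ℕ) (x : ℕ × ℕ → ℝ) (j : ℕ) : ℝ :=
  ∑' i : ℕ, |x (i, j)| * A N i

/-- `‖x‖_N = Σ_{j ≤ N} |(x_{i,j})_i|_N`, the seminorms of `s^ℕ`. -/
noncomputable def normK (A : ℕ → ℕ → ℝ) (N : ℕ) (x : ℕ × ℕ → ℝ) : ℝ :=
  ∑ j ∈ Finset.range (N + 1), colNorm A N x j

/-- `|||x|||_N = Σ_j |(x_{i,j})_i|_N`, the norms of `s₀^ℕ`. -/
noncomputable def norm3 (A : ℕ → ℕ → ℝ) (N : ℕ) (x : ℕ × ℕ → ℝ) : ℝ :=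
  ∑' j : ℕ, colNorm A N x j

/-!
The hypothesis on `D n` bounds `|||P(T) y - e₀|||_{N_n}` by `2 / A_{N_n,a_n} · |||e_{pos(a_n,0)}|||_{N_n}`
plus `D n` times a maximum over the orbit of `e₀`. The first term is exactly `2`, since
`e_{pos(a_n,0)}` is the unit vector in row `a_n`. For the second, the orbit of `e₀` is computed
block by block: on a head `[pos(Δ_k,0), pos(a_k,0))` the map `T` is a weighted shift, so
`T^j e₀ = α_j e_j`; at the end of the head the orbit restarts, `T^j e₀ = A⁻¹ e_j + T^{j - pos(a_k,0)} e₀`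
along the tail; and the last step of the tail cancels the restarted copy, so the next head again
starts with `α_j e_j`. Every `j` in the range of the maximum lies in the head of block `n + 1`,
before `pos(s_{n+1},0)` and in a row below `b_{n+1}`, whence
`|||T^j e₀|||_{N_n} ≤ A_{N_n,b_{n+1}} / A_{N_{n+1},a_{n+1}} ≤ 1 / D n`.
-/

section Enumeration

variable {b : ℕ → ℕ}

theorem enum_succ (k : ℕ) : enum b (k + 1) = nextFn b (enum b k) :=
  Function.iterate_succ_apply' _ _ _

theorem fst_nextFn_le (p : ℕ × ℕ) : (nextFn b p).1 ≤ p.1 + 1 := by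
  unfold nextFn; split_ifs <;> dsimp only <;> omega

theorem fst_enum_le (k : ℕ) : (enum b k).1 ≤ k := by
  induction k with
  | zero => simp [enum]
  | succ k ih => rw [enum_succ]; linarith [fst_nextFn_le (b := b) (enum b k)]

theorem nextFn_row_zero {i : ℕ} (hi : ∀ m, 1 ≤ m → i ≠ b m) : nextFn b (i, 0) = (i + 1, 0) := by
  have hodd : ¬ Odd 0 := Nat.not_odd_zero
  unfold nextFn
  rw [if_neg, if_neg, if_pos Even.zero]
  · rintro (⟨m, -, -, hodd', -⟩ | ⟨m, -, -, -, h0, -⟩)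
    exacts [hodd hodd', lt_irrefl 0 h0]
  · rintro (⟨m, hm, hb, -⟩ | ⟨m, -, -, hodd', -⟩ | ⟨-, hodd'⟩)
    exacts [hi m hm hb, hodd hodd', hodd hodd']

theorem enum_add_of_row_zero {k x t : ℕ} (hk : enum b k = (x, 0))
    (hb : ∀ i, x ≤ i → i < x + t → ∀ m, 1 ≤ m → i ≠ b m) : enum b (k + t) = (x + t, 0) := by
  induction t with
  | zero => exact hk
  | succ t ih =>
    rw [← add_assoc, enum_succ, ih fun i hi hit => hb i hi (by omega),
      nextFn_row_zero (hb (x + t) (by omega) (by omega)), add_assoc]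

end Enumeration

section Positions

variable {b : ℕ → ℕ} {pos : ℕ × ℕ → ℕ}

theorem enum_pos (hpos : ∀ p k, pos p = k ↔ (nextFn b)^[k] (0, 0) = p) (p : ℕ × ℕ) :
    enum b (pos p) = p :=
  (hpos p _).1 rfl

theorem le_pos (hpos : ∀ p k, pos p = k ↔ (nextFn b)^[k] (0, 0) = p) (x : ℕ) : x ≤ pos (x, 0) := by
  simpa only [enum_pos hpos] using fst_enum_le (b := b) (pos (x, 0))

theorem pos_add_of_row_zero (hpos : ∀ p k, pos p = k ↔ (nextFn b)^[k] (0, 0) = p) {x t : ℕ}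
    (hb : ∀ i, x ≤ i → i < x + t → ∀ m, 1 ≤ m → i ≠ b m) : pos (x + t, 0) = pos (x, 0) + t :=
  (hpos _ _).2 (enum_add_of_row_zero (enum_pos hpos _) hb)

theorem pos_one_zero (hpos : ∀ p k, pos p = k ↔ (nextFn b)^[k] (0, 0) = p)
    (hbpos : ∀ n, 1 ≤ n → 0 < b n) : pos (1, 0) = 1 := by
  have h := pos_add_of_row_zero hpos (x := 0) (t := 1) fun i _ hi m hm => by
    have := hbpos m hm; omega
  rwa [(hpos (0, 0) 0).2 rfl] at h

variable {a s Δ : ℕ → ℕ}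

theorem pos_Δ_lt_pos_a (hpos : ∀ p k, pos p = k ↔ (nextFn b)^[k] (0, 0) = p)
    (hbpos : ∀ n, 1 ≤ n → 0 < b n) (hΔ0 : Δ 0 = 1) (hord0 : Δ 0 < a 0 ∧ a 0 < Δ 1)
    (hord : ∀ n, 1 ≤ n → Δ n < b n ∧ 2 * b n < s n ∧ s n < a n ∧ a n < Δ (n + 1))
    (hbΔ : ∀ n, 1 ≤ n → 2 * pos (Δ n, 0) ≤ b n) (k : ℕ) : pos (Δ k, 0) < pos (a k, 0) := by
  have := le_pos hpos (a k)
  rcases Nat.eq_zero_or_pos k with rfl | hk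
  · rw [hΔ0, pos_one_zero hpos hbpos]; omega
  · have := hbΔ k hk; have := hord k hk; have := hbpos k hk; omega

theorem pos_Δ_lt_pos_s (hpos : ∀ p k, pos p = k ↔ (nextFn b)^[k] (0, 0) = p)
    (hord : ∀ n, 1 ≤ n → Δ n < b n ∧ 2 * b n < s n ∧ s n < a n ∧ a n < Δ (n + 1))
    (hbΔ : ∀ n, 1 ≤ n → 2 * pos (Δ n, 0) ≤ b n) {k : ℕ} (hk : 1 ≤ k) :
    pos (Δ k, 0) < pos (s k, 0) := by
  have := le_pos hpos (s k); have := hbΔ k hk; have := hord k hk; omega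

theorem pos_Δ_succ (hpos : ∀ p k, pos p = k ↔ (nextFn b)^[k] (0, 0) = p)
    (hbmono : ∀ n, 1 ≤ n → b n < b (n + 1)) (hΔ : ∀ n, Δ (n + 1) = a n + pos (Δ n, 0))
    (hord : ∀ n, 1 ≤ n → Δ n < b n ∧ 2 * b n < s n ∧ s n < a n ∧ a n < Δ (n + 1)) (k : ℕ) :
    pos (Δ (k + 1), 0) = pos (a k, 0) + pos (Δ k, 0) := by
  have hb : StrictMonoOn b (Set.Ici 1) :=
    strictMonoOn_of_lt_succ Set.ordConnected_Ici fun m _ hm _ => hbmono m hm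
  rw [hΔ k]
  -- no `b m` lies in `[a k, Δ (k + 1))`: for `m ≤ k` it is below `a k`, otherwise above `Δ (k + 1)`
  refine pos_add_of_row_zero hpos fun i hi hit m hm him => ?_
  rcases Nat.lt_or_ge k m with hkm | hmk
  · have := hb.monotoneOn (show 1 ≤ k + 1 by omega) hm hkm
    have := (hord (k + 1) le_add_self).1
    have := hΔ k
    omega
  · have := hb.monotoneOn hm (show 1 ≤ k by omega) hmk
    have := hord k (by omega)
    omega

end Positions

section Orbit

variable {K M : Type*} [Field K] [AddCommGroup M] [Module K M] (T : M →ₗ[K] M) (e : ℕ → M)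

theorem apply_pow_pred_apply {n : ℕ} (hn : 0 < n) (x : M) : T ((T ^ (n - 1)) x) = (T ^ n) x := by
  rw [← Module.End.mul_apply, ← pow_succ', Nat.sub_add_cancel hn]

theorem pow_apply_of_weighted_shift {α : ℕ → K} {x : M} {p q : ℕ}
    (hα : ∀ j, p ≤ j → j < q → α j ≠ 0)
    (hT : ∀ j, p ≤ j → j + 1 < q → T (e j) = (α (j + 1) / α j) • e (j + 1))
    (hp : (T ^ p) x = α p • e p) {j : ℕ} (hpj : p ≤ j) (hjq : j < q) :
    (T ^ j) x = α j • e j := by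
  induction j, hpj using Nat.le_induction with
  | base => exact hp
  | succ j hpj ih =>
    rw [pow_succ', Module.End.mul_apply, ih (by omega), map_smul, hT j hpj hjq, smul_smul,
      mul_div_cancel₀ _ (hα j hpj (by omega))]

theorem pow_apply_of_shift {c : K} {x : M} {q r : ℕ}
    (hT : ∀ j, q ≤ j → j + 1 < r → T (e j) = e (j + 1))
    (hq : (T ^ q) x = c • e q + x) {j : ℕ} (hqj : q ≤ j) (hjr : j < r) :
    (T ^ j) x = c • e j + (T ^ (j - q)) x := by
  induction j, hqj using Nat.le_induction with
  | base => rwa [Nat.sub_self, pow_zero, Module.End.one_apply]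
  | succ j hqj ih =>
    rw [pow_succ', Module.End.mul_apply, ih (by omega), map_add, map_smul, hT j hqj hjr,
      Nat.sub_add_comm hqj, pow_succ', Module.End.mul_apply]

theorem pow_apply_eq_smul_of_blocks {P Q : ℕ → ℕ} {α β : ℕ → K}
    (hP0 : P 0 = 1) (hPQ : ∀ k, P k < Q k) (hPsucc : ∀ k, P (k + 1) = Q k + P k)
    (hα : ∀ k j, P k ≤ j → j < Q k → α j ≠ 0) (hβ : ∀ k, β k ≠ 0)
    (hT0 : T (e 0) = α 1 • e 1)
    (hTa : ∀ k j, P k ≤ j → j + 1 < Q k → T (e j) = (α (j + 1) / α j) • e (j + 1))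
    (hTb : ∀ k, T (e (Q k - 1)) = (α (Q k - 1))⁻¹ • ((β k)⁻¹ • e (Q k) + e 0))
    (hTc : ∀ k j, Q k ≤ j → j + 1 < P (k + 1) → T (e j) = e (j + 1))
    (hTd : ∀ k, T (e (P (k + 1) - 1)) =
      (β k * α (P (k + 1))) • e (P (k + 1)) - (β k * α (P k)) • e (P k))
    (k : ℕ) {j : ℕ} (hkj : P k ≤ j) (hjk : j < Q k) : (T ^ j) (e 0) = α j • e j := by
  have hP : ∀ k, 0 < P k := fun k => by
    induction k with
    | zero => omega
    | succ k _ => rw [hPsucc]; have := hPQ k; omega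
  suffices hstart : ∀ k, (T ^ P k) (e 0) = α (P k) • e (P k) from
    pow_apply_of_weighted_shift T e (hα k) (hTa k) (hstart k) hkj hjk
  clear hkj hjk
  intro k
  induction k with
  | zero => rw [hP0, pow_one, hT0]
  | succ k ih =>
    have hPQk := hPQ k
    have hPk := hP k
    have hPsk := hPsucc k
    have hQ : (T ^ Q k) (e 0) = (β k)⁻¹ • e (Q k) + e 0 := by
      rw [← apply_pow_pred_apply T (by omega),
        pow_apply_of_weighted_shift T e (hα k) (hTa k) ih (by omega) (by omega), map_smul, hTb,
        smul_smul, mul_inv_cancel₀ (hα k _ (by omega) (by omega)), one_smul]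
    have htail := pow_apply_of_shift T e (hTc k) hQ (j := P (k + 1) - 1) (by omega) (by omega)
    rw [show P (k + 1) - 1 - Q k = P k - 1 by omega] at htail
    rw [← apply_pow_pred_apply T (hP _), htail, map_add, map_smul, hTd,
      apply_pow_pred_apply T hPk, ih, smul_sub, smul_smul, smul_smul,
      inv_mul_cancel_left₀ (hβ k), inv_mul_cancel_left₀ (hβ k), sub_add_cancel]

end Orbit

theorem norm3_single (A : ℕ → ℕ → ℝ) (N : ℕ) (p : ℕ × ℕ) (c : ℝ) :
    norm3 A N ⇑(Finsupp.single p c) = |c| * A N p.1 := by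
  unfold norm3
  rw [tsum_eq_single p.2, colNorm, tsum_eq_single p.1]
  · simp
  · intro i hi
    simp [Prod.ext_iff, Ne.symm hi]
  · intro j hj
    simp [colNorm, Prod.ext_iff, Ne.symm hj]

section Weights

variable {A : ℕ → ℕ → ℝ} {b Nn a s Δ : ℕ → ℕ} {pos : ℕ × ℕ → ℕ} {D α : ℕ → ℝ}

theorem α_pos (hpos : ∀ p k, pos p = k ↔ (nextFn b)^[k] (0, 0) = p) (hA1 : ∀ N j, 1 ≤ A N j)
    (hD : ∀ n, 1 ≤ D n)
    (hord : ∀ n, 1 ≤ n → Δ n < b n ∧ 2 * b n < s n ∧ s n < a n ∧ a n < Δ (n + 1))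
    (hbΔ : ∀ n, 1 ≤ n → 2 * pos (Δ n, 0) ≤ b n)
    (hα0 : ∀ j, pos (Δ 0, 0) ≤ j → j < pos (a 0, 0) →
      α j = (2 : ℝ) ^ (j - pos (Δ 0, 0)) / A (Nn 0) (a 0))
    (hα1 : ∀ n j, 1 ≤ n → pos (Δ n, 0) ≤ j → j < pos (s n, 0) →
      α j = (1 / A (Nn n) (a n)) * ((2 * D (n - 1)) ^ (j - pos (Δ n, 0)))⁻¹)
    (hα2 : ∀ n j, 1 ≤ n → pos (s n, 0) ≤ j → j < pos (a n, 0) →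
      α j = α (pos (s n, 0) - 1) * 2 ^ (j - pos (s n, 0)))
    {k j : ℕ} (hkj : pos (Δ k, 0) ≤ j) (hjk : j < pos (a k, 0)) : 0 < α j := by
  have hApos : ∀ N j, 0 < A N j := fun N j => one_pos.trans_le (hA1 N j)
  have hhead : ∀ j, 1 ≤ k → pos (Δ k, 0) ≤ j → j < pos (s k, 0) → 0 < α j := by
    intro j hk hkj hjs
    have := hApos (Nn k) (a k)
    have := hD (k - 1)
    rw [hα1 k j hk hkj hjs]
    positivity
  rcases Nat.eq_zero_or_pos k with rfl | hk
  · rw [hα0 j hkj hjk]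
    exact div_pos (by positivity) (hApos _ _)
  · rcases lt_or_ge j (pos (s k, 0)) with hjs | hsj
    · exact hhead j hk hkj hjs
    · have := pos_Δ_lt_pos_s hpos hord hbΔ hk
      rw [hα2 k j hk hsj hjk]
      exact mul_pos (hhead _ hk (by omega) (by omega)) (by positivity)

theorem abs_α_le (hA1 : ∀ N j, 1 ≤ A N j) (hD : ∀ n, 1 ≤ D n)
    (hα1 : ∀ n j, 1 ≤ n → pos (Δ n, 0) ≤ j → j < pos (s n, 0) →
      α j = (1 / A (Nn n) (a n)) * ((2 * D (n - 1)) ^ (j - pos (Δ n, 0)))⁻¹)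
    {k j : ℕ} (hk : 1 ≤ k) (hkj : pos (Δ k, 0) ≤ j) (hjs : j < pos (s k, 0)) :
    |α j| ≤ (A (Nn k) (a k))⁻¹ := by
  have hA := one_pos.trans_le (hA1 (Nn k) (a k))
  have h2D : 1 ≤ 2 * D (k - 1) := by linarith [hD (k - 1)]
  rw [hα1 k j hk hkj hjs, abs_of_pos (by positivity), one_div]
  exact mul_le_of_le_one_right (by positivity) (inv_le_one_of_one_le₀ (one_le_pow₀ h2D))

end Weights

theorem norm3_pow_apply_le {A : ℕ → ℕ → ℝ} {b Nn a s Δ : ℕ → ℕ} {pos : ℕ × ℕ → ℕ}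
    {D α : ℕ → ℝ} {T : (ℕ × ℕ →₀ ℝ) →ₗ[ℝ] (ℕ × ℕ →₀ ℝ)}
    (hpos : ∀ p k, pos p = k ↔ (nextFn b)^[k] (0, 0) = p) (hA1 : ∀ N j, 1 ≤ A N j)
    (hA3m : ∀ N, Monotone fun j => A N j) (hD : ∀ n, 1 ≤ D n)
    (hord : ∀ n, 1 ≤ n → Δ n < b n ∧ 2 * b n < s n ∧ s n < a n ∧ a n < Δ (n + 1))
    (hbΔ : ∀ n, 1 ≤ n → 2 * pos (Δ n, 0) ≤ b n)
    (hc4 : ∀ n, 1 ≤ n → D (n - 1) * A (Nn (n - 1)) (b n) ≤ A (Nn n) (a n))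
    (hα1 : ∀ n j, 1 ≤ n → pos (Δ n, 0) ≤ j → j < pos (s n, 0) →
      α j = (1 / A (Nn n) (a n)) * ((2 * D (n - 1)) ^ (j - pos (Δ n, 0)))⁻¹)
    (horbit : ∀ k j, pos (Δ k, 0) ≤ j → j < pos (a k, 0) → (T ^ j) (eVec b 0) = α j • eVec b j)
    {n j : ℕ} (hj : j ∈ Set.Icc (pos (Δ (n + 1), 0)) (2 * (pos (Δ (n + 1), 0) - 1))) :
    norm3 A (Nn n) ⇑((T ^ j) (eVec b 0)) ≤ 1 / D n := by
  obtain ⟨hj1, hj2⟩ := hj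
  have hbΔn := hbΔ (n + 1) le_add_self
  have hordn := hord (n + 1) le_add_self
  have hjs : j < pos (s (n + 1), 0) := by have := le_pos hpos (s (n + 1)); omega
  have hja : j < pos (a (n + 1), 0) := by have := le_pos hpos (a (n + 1)); omega
  have hαj := abs_α_le hA1 hD hα1 le_add_self hj1 hjs
  have hAj : A (Nn n) (enum b j).1 ≤ A (Nn n) (b (n + 1)) :=
    hA3m _ ((fst_enum_le j).trans (by omega))
  have hc4n := hc4 (n + 1) le_add_self
  rw [Nat.add_sub_cancel] at hc4n
  have hA := one_pos.trans_le (hA1 (Nn (n + 1)) (a (n + 1)))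
  have hDn := one_pos.trans_le (hD n)
  rw [horbit (n + 1) j hj1 hja, eVec, Finsupp.smul_single_one, norm3_single]
  calc |α j| * A (Nn n) (enum b j).1
      ≤ (A (Nn (n + 1)) (a (n + 1)))⁻¹ * A (Nn n) (b (n + 1)) :=
        mul_le_mul hαj hAj (one_pos.le.trans (hA1 _ _)) (inv_pos.2 hA).le
    _ ≤ 1 / D n := by
        rw [inv_mul_le_iff₀ hA, mul_one_div, le_div_iff₀ hDn, mul_comm]
        exact hc4n

theorem heads_estimate_general
    (A : ℕ → ℕ → ℝ) (b : ℕ → ℕ) (pos : ℕ × ℕ → ℕ)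
    (Nn a s : ℕ → ℕ) (D : ℕ → ℝ) (Δ : ℕ → ℕ) (α : ℕ → ℝ)
    (T : (ℕ × ℕ →₀ ℝ) →ₗ[ℝ] (ℕ × ℕ →₀ ℝ))
    (τ : ℕ → (ℕ × ℕ →₀ ℝ) →ₗ[ℝ] (ℕ × ℕ →₀ ℝ))
    (hA1 : ∀ N j, 1 ≤ A N j)
    (hA3m : ∀ N, Monotone fun j => A N j)
    (hbpos : ∀ n, 1 ≤ n → 0 < b n)
    (hbmono : ∀ n, 1 ≤ n → b n < b (n + 1))
    (hpos : ∀ p k, pos p = k ↔ (nextFn b)^[k] (0, 0) = p)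
    (hD : ∀ n, 1 ≤ D n)
    (hΔ0 : Δ 0 = 1)
    (hΔ : ∀ n, Δ (n + 1) = a n + pos (Δ n, 0))
    (hord0 : Δ 0 < a 0 ∧ a 0 < Δ 1)
    (hord : ∀ n, 1 ≤ n → Δ n < b n ∧ 2 * b n < s n ∧ s n < a n ∧ a n < Δ (n + 1))
    (hbΔ : ∀ n, 1 ≤ n → 2 * pos (Δ n, 0) ≤ b n)
    (hc4 : ∀ n, 1 ≤ n → D (n - 1) * A (Nn (n - 1)) (b n) ≤ A (Nn n) (a n))
    (hα0 : ∀ j, pos (Δ 0, 0) ≤ j → j < pos (a 0, 0) →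
      α j = (2 : ℝ) ^ (j - pos (Δ 0, 0)) / A (Nn 0) (a 0))
    (hα1 : ∀ n j, 1 ≤ n → pos (Δ n, 0) ≤ j → j < pos (s n, 0) →
      α j = (1 / A (Nn n) (a n)) * ((2 * D (n - 1)) ^ (j - pos (Δ n, 0)))⁻¹)
    (hα2 : ∀ n j, 1 ≤ n → pos (s n, 0) ≤ j → j < pos (a n, 0) →
      α j = α (pos (s n, 0) - 1) * 2 ^ (j - pos (s n, 0)))
    (hT0 : T (eVec b 0) = α 1 • eVec b 1)
    (hTa : ∀ n j, pos (Δ n, 0) ≤ j → j + 1 < pos (a n, 0) →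
      T (eVec b j) = (α (j + 1) / α j) • eVec b (j + 1))
    (hTb : ∀ n : ℕ, T (eVec b (pos (a n, 0) - 1)) =
      (α (pos (a n, 0) - 1))⁻¹ • ((A (Nn n) (a n))⁻¹ • eVec b (pos (a n, 0)) + eVec b 0))
    (hTc : ∀ n j, pos (a n, 0) ≤ j → j + 1 < pos (Δ (n + 1), 0) →
      T (eVec b j) = eVec b (j + 1))
    (hTd : ∀ n : ℕ, T (eVec b (pos (Δ (n + 1), 0) - 1)) =
      (A (Nn n) (a n) * α (pos (Δ (n + 1), 0))) • eVec b (pos (Δ (n + 1), 0)) -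
        (A (Nn n) (a n) * α (pos (Δ n, 0))) • eVec b (pos (Δ n, 0)))
    (hDn : ∀ n : ℕ, ∀ y : ℕ × ℕ →₀ ℝ,
      y ∈ Submodule.span ℝ (eVec b '' {j | j < pos (Δ (n + 1), 0)}) →
      norm3 A 0 ⇑y ≤ 1 → 1 / 2 ≤ norm3 A 0 ⇑(τ n y) →
      ∃ c : ℕ → ℝ, (∑ i ∈ Finset.Icc 1 (pos (Δ (n + 1), 0)), |c i|) ≤ D n ∧
        norm3 A (Nn n)
            ⇑((∑ i ∈ Finset.Icc 1 (pos (Δ (n + 1), 0)), c i • (T ^ i) y) - eVec b 0) ≤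
          2 / A (Nn n) (a n) * norm3 A (Nn n) ⇑(eVec b (pos (a n, 0))) +
            D n * sSup ((fun j => norm3 A (Nn n) ⇑((T ^ j) (eVec b 0))) ''
              Set.Icc (pos (Δ (n + 1), 0)) (2 * (pos (Δ (n + 1), 0) - 1))))
    :
    ∀ n : ℕ, ∀ y : ℕ × ℕ →₀ ℝ,
      y ∈ Submodule.span ℝ (eVec b '' {j | j < pos (Δ (n + 1), 0)}) →
      norm3 A 0 ⇑y ≤ 1 → 1 / 2 ≤ norm3 A 0 ⇑(τ n y) →
      ∃ c : ℕ → ℝ, (∑ i ∈ Finset.Icc 1 (pos (Δ (n + 1), 0)), |c i|) ≤ D n ∧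
        norm3 A (Nn n)
          ⇑((∑ i ∈ Finset.Icc 1 (pos (Δ (n + 1), 0)), c i • (T ^ i) y) - eVec b 0) ≤ 3 := by
  intro n y hy h1 h2
  obtain ⟨c, hc, hbound⟩ := hDn n y hy h1 h2
  refine ⟨c, hc, hbound.trans ?_⟩
  have hApos : ∀ N j, 0 < A N j := fun N j => one_pos.trans_le (hA1 N j)
  have hDpos : 0 < D n := one_pos.trans_le (hD n)
  have horbit := pow_apply_eq_smul_of_blocks T (eVec b) (hΔ0 ▸ pos_one_zero hpos hbpos)
    (pos_Δ_lt_pos_a hpos hbpos hΔ0 hord0 hord hbΔ) (pos_Δ_succ hpos hbmono hΔ hord)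
    (fun _ _ hkj hjk => (α_pos hpos hA1 hD hord hbΔ hα0 hα1 hα2 hkj hjk).ne')
    (fun _ => (hApos _ _).ne') hT0 hTa hTb hTc hTd
  have hsup : ∀ x ∈ (fun j => norm3 A (Nn n) ⇑((T ^ j) (eVec b 0))) ''
      Set.Icc (pos (Δ (n + 1), 0)) (2 * (pos (Δ (n + 1), 0) - 1)), x ≤ 1 / D n := by
    rintro _ ⟨j, hj, rfl⟩
    exact norm3_pow_apply_le hpos hA1 hA3m hD hord hbΔ hc4 hα1 horbit hj
  rw [eVec, norm3_single, enum_pos hpos, abs_one, one_mul, div_mul_cancel₀ _ (hApos _ _).ne']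
  calc 2 + D n * sSup _ ≤ 2 + D n * (1 / D n) := by
        gcongr; exact Real.sSup_le hsup (by positivity)
    _ = 3 := by rw [mul_one_div_cancel hDpos.ne']; norm_num

/-- For every `n` and `y ∈ K_n` there is a polynomial `P(t) = Σ_{i=1}^{pos(Δ_{n+1},0)} c_i tⁱ` with `Σ |c_i| ≤ D_n` and `|||P(T) y - e₀|||_{N_n} ≤ 3`. -/
theorem heads_estimate
    (A : ℕ → ℕ → ℝ) (b : ℕ → ℕ) (pos : ℕ × ℕ → ℕ)
    (Nn a s : ℕ → ℕ) (D : ℕ → ℝ) (Δ : ℕ → ℕ) (α : ℕ → ℝ)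
    (T : (ℕ × ℕ →₀ ℝ) →ₗ[ℝ] (ℕ × ℕ →₀ ℝ))
    (τ : ℕ → (ℕ × ℕ →₀ ℝ) →ₗ[ℝ] (ℕ × ℕ →₀ ℝ))
    (hA1 : ∀ N j, 1 ≤ A N j)
    (hA2m : ∀ j, Monotone fun N => A N j)
    (hA2u : ∀ j, ¬ BddAbove (Set.range fun N => A N j))
    (hA3m : ∀ N, Monotone fun j => A N j)
    (hA3u : ∀ N, ¬ BddAbove (Set.range fun j => A N j))
    (hA4 : ∀ N j, A N (j + 1) ≤ 2 * A N j)
    (hA5 : ∀ N, Filter.Tendsto (fun j => A N j / A (N + 1) j) Filter.atTop (nhds 0))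
    (hA6 : ∀ N, Filter.Tendsto (fun j => (2 : ℝ) ^ j / A N j) Filter.atTop Filter.atTop)
    (hbpos : ∀ n, 1 ≤ n → 0 < b n)
    (hbmono : ∀ n, 1 ≤ n → b n < b (n + 1))
    (hbgap : ∀ n, 1 ≤ n → 2 * b n + 1 < b (n + 1))
    (hpos : ∀ p k, pos p = k ↔ (nextFn b)^[k] (0, 0) = p)
    (hNle : ∀ n, Nn n ≤ n)
    (hNinf : ∀ N m, ∃ n, m ≤ n ∧ Nn n = N)
    (hD : ∀ n, 1 ≤ D n)
    (hΔ0 : Δ 0 = 1)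
    (hΔ : ∀ n, Δ (n + 1) = a n + pos (Δ n, 0))
    (hord0 : Δ 0 < a 0 ∧ a 0 < Δ 1)
    (hord : ∀ n, 1 ≤ n → Δ n < b n ∧ 2 * b n < s n ∧ s n < a n ∧ a n < Δ (n + 1))
    (hbΔ : ∀ n, 1 ≤ n → 2 * pos (Δ n, 0) ≤ b n)
    (hc2bn : ∀ n k, 1 ≤ n → b n ≤ k →
      (4 : ℝ) ^ pos (Δ n, 0) * A (Nn (n - 1) + 1) k ≤ A (Nn (n - 1) + 2) k / D (n - 1))
    (hc1 : ∀ n, 1 ≤ n →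
      A (Nn n) (a n) * (2 * D (n - 1)) ^ (pos (s n, 0) - pos (Δ n, 0) - 1) ≤
        (2 : ℝ) ^ (pos (a n, 0) - pos (s n, 0) - 1))
    (hc2 : ∀ n, 1 ≤ n → A (Nn (n - 1)) (a (n - 1)) ≤ A (Nn n) (a n))
    (hc4 : ∀ n, 1 ≤ n → D (n - 1) * A (Nn (n - 1)) (b n) ≤ A (Nn n) (a n))
    (hc3 : ∀ n, A (Nn n) (a n) * 4 ^ pos (Δ n, 0) * A 0 0 ≤ A (Nn n + 1) (a n))
    (hc1' : A (Nn 0) (a 0) ≤ (2 : ℝ) ^ (pos (a 0, 0) - pos (Δ 0, 0) - 1))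
    (hα0 : ∀ j, pos (Δ 0, 0) ≤ j → j < pos (a 0, 0) →
      α j = (2 : ℝ) ^ (j - pos (Δ 0, 0)) / A (Nn 0) (a 0))
    (hα1 : ∀ n j, 1 ≤ n → pos (Δ n, 0) ≤ j → j < pos (s n, 0) →
      α j = (1 / A (Nn n) (a n)) * ((2 * D (n - 1)) ^ (j - pos (Δ n, 0)))⁻¹)
    (hα2 : ∀ n j, 1 ≤ n → pos (s n, 0) ≤ j → j < pos (a n, 0) →
      α j = α (pos (s n, 0) - 1) * 2 ^ (j - pos (s n, 0)))
    (hT0 : T (eVec b 0) = α 1 • eVec b 1)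
    (hTa : ∀ n j, pos (Δ n, 0) ≤ j → j + 1 < pos (a n, 0) →
      T (eVec b j) = (α (j + 1) / α j) • eVec b (j + 1))
    (hTb : ∀ n : ℕ, T (eVec b (pos (a n, 0) - 1)) =
      (α (pos (a n, 0) - 1))⁻¹ • ((A (Nn n) (a n))⁻¹ • eVec b (pos (a n, 0)) + eVec b 0))
    (hTc : ∀ n j, pos (a n, 0) ≤ j → j + 1 < pos (Δ (n + 1), 0) →
      T (eVec b j) = eVec b (j + 1))
    (hTd : ∀ n : ℕ, T (eVec b (pos (Δ (n + 1), 0) - 1)) =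
      (A (Nn n) (a n) * α (pos (Δ (n + 1), 0))) • eVec b (pos (Δ (n + 1), 0)) -
        (A (Nn n) (a n) * α (pos (Δ n, 0))) • eVec b (pos (Δ n, 0)))
    (hτ : ∀ (n : ℕ) (y : ℕ → ℝ),
      τ n (∑ j ∈ Finset.range (pos (Δ (n + 1), 0)), y j • (T ^ j) (eVec b 0)) =
        ∑ j ∈ Finset.range (pos (a n, 0)), y j • (T ^ j) (eVec b 0))
    (hDn : ∀ n : ℕ, ∀ y : ℕ × ℕ →₀ ℝ,
      y ∈ Submodule.span ℝ (eVec b '' {j | j < pos (Δ (n + 1), 0)}) →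
      norm3 A 0 ⇑y ≤ 1 → 1 / 2 ≤ norm3 A 0 ⇑(τ n y) →
      ∃ c : ℕ → ℝ, (∑ i ∈ Finset.Icc 1 (pos (Δ (n + 1), 0)), |c i|) ≤ D n ∧
        norm3 A (Nn n)
            ⇑((∑ i ∈ Finset.Icc 1 (pos (Δ (n + 1), 0)), c i • (T ^ i) y) - eVec b 0) ≤
          2 / A (Nn n) (a n) * norm3 A (Nn n) ⇑(eVec b (pos (a n, 0))) +
            D n * sSup ((fun j => norm3 A (Nn n) ⇑((T ^ j) (eVec b 0))) ''
              Set.Icc (pos (Δ (n + 1), 0)) (2 * (pos (Δ (n + 1), 0) - 1))))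
    :
    ∀ n : ℕ, ∀ y : ℕ × ℕ →₀ ℝ,
      y ∈ Submodule.span ℝ (eVec b '' {j | j < pos (Δ (n + 1), 0)}) →
      norm3 A 0 ⇑y ≤ 1 → 1 / 2 ≤ norm3 A 0 ⇑(τ n y) →
      ∃ c : ℕ → ℝ, (∑ i ∈ Finset.Icc 1 (pos (Δ (n + 1), 0)), |c i|) ≤ D n ∧
        norm3 A (Nn n)
          ⇑((∑ i ∈ Finset.Icc 1 (pos (Δ (n + 1), 0)), c i • (T ^ i) y) - eVec b 0) ≤ 3 :=
  heads_estimate_general A b pos Nn a s D Δ α T τ hA1 hA3m hbpos hbmono hpos hD hΔ0 hΔ hord0 hord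
    hbΔ hc4 hα0 hα1 hα2 hT0 hTa hTb hTc hTd hDn
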